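/- arXiv:1504.01557 — 2 statements merged into one kernel-verified Lean document; each statement's English description precedes it below -/
import Mathlib

section
/- Uniform boundedness of finite reachability costs in the potential-outcome sets: in a quantitative reachability game, for any history hv, ordinal α, and player i, if every play ρ ∈ P_α(hv) satisfies λ_i(ρ) < +∞, then there exists a constant c ∈ ℕ such that λ_i(ρ) ≤ c for all ρ ∈ P_α(hv). Equivalently, the sets P_α(hv) are closed in V^ω. -/
open Classical

noncomputable section

/-- A multiplayer turn-based quantitative game on a directed graph:
`owner` assigns each vertex to a player, `E` is the edge relation (every
vertex has a successor), and `cost i` is player `i`'s cost function on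
infinite sequences of vertices (to be minimized), valued in `ℝ ∪ {±∞}`. -/
structure QGame (P V : Type) where
  owner : V → P
  E : V → V → Prop
  succ_exists : ∀ v, ∃ v', E v v'
  cost : P → (ℕ → V) → EReal

namespace QGame

variable {P V : Type}

/-- An infinite play of the game: consecutive vertices are joined by edges. -/
def IsPlay (G : QGame P V) (ρ : ℕ → V) : Prop := ∀ n, G.E (ρ n) (ρ (n + 1))

/-- Concatenation `hρ` of a finite history `h` with an infinite play `ρ`. -/
def prepend (h : List V) (ρ : ℕ → V) : ℕ → V := fun n =>
  if hn : n < h.length then h.get ⟨n, hn⟩ else ρ (n - h.length)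

/-- The prefix of length `n` of a play, as a list. -/
def playPrefix (ρ : ℕ → V) (n : ℕ) : List V := List.ofFn fun k : Fin n => ρ k

/-- `hv` is a history of the game initialized at `v0`: here `h` is the strict
past and `v` the current vertex; the sequence `h ++ [v]` starts at `v0` and
follows edges. -/
def IsHist (G : QGame P V) (v0 : V) (h : List V) (v : V) : Prop :=
  (h ++ [v]).head? = some v0 ∧ List.Chain' G.E (h ++ [v])

/-- A (turn-based) strategy profile: given the past history and the current
vertex, choose the next vertex.  An individual strategy of player `i` is of
the same type; only its values at vertices owned by `i` matter. -/
abbrev Strat (P V : Type) := List V → V → V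

/-- A profile/strategy is valid if it always follows edges. -/
def Valid (G : QGame P V) (σ : Strat P V) : Prop := ∀ h v, G.E v (σ h v)

/-- History/current-vertex pair produced after `n` steps of `σ` from `v`. -/
def outcomeAux (σ : Strat P V) (v : V) : ℕ → List V × V
  | 0 => ([], v)
  | n + 1 =>
      let p := outcomeAux σ v n
      (p.1 ++ [p.2], σ p.1 p.2)

/-- The outcome play of profile `σ` from initial vertex `v`. -/
def outcome (σ : Strat P V) (v : V) (n : ℕ) : V := (outcomeAux σ v n).2

/-- The profile where player `i` unilaterally deviates to strategy `τ`
from the profile `σ`. -/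
def devProf (G : QGame P V) (σ τ : Strat P V) (i : P) : Strat P V :=
  fun h v => if G.owner v = i then τ h v else σ h v

/-- The set of deviation steps of `τ` from `σ` (for player `i`, from `v`):
positions `n` along the outcome of the deviated profile where the current
vertex belongs to player `i` and `τ` disagrees with `σ`. -/
def devSteps (G : QGame P V) (σ τ : Strat P V) (i : P) (v : V) : Set ℕ :=
  {n | G.owner (outcome (G.devProf σ τ i) v n) = i ∧
       σ (outcomeAux (G.devProf σ τ i) v n).1 (outcome (G.devProf σ τ i) v n) ≠
       τ (outcomeAux (G.devProf σ τ i) v n).1 (outcome (G.devProf σ τ i) v n)}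

/-- `τ` is finitely deviating from `σ`. -/
def FinDev (G : QGame P V) (σ τ : Strat P V) (i : P) (v : V) : Prop :=
  (G.devSteps σ τ i v).Finite

/-- `τ` is one-shot deviating from `σ`: its unique deviation step is at the
initial vertex. -/
def OneShotDev (G : QGame P V) (σ τ : Strat P V) (i : P) (v : V) : Prop :=
  G.devSteps σ τ i v = {0}

/-- Nash equilibrium of the profile `σ` from `v`, with respect to a cost
assignment `c` (no player has a profitable unilateral deviation). -/
def IsNEwith (G : QGame P V) (c : P → (ℕ → V) → EReal) (σ : Strat P V) (v : V) : Prop :=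
  ∀ i τ, G.Valid τ →
    c i (outcome σ v) ≤ c i (outcome (G.devProf σ τ i) v)

/-- Weak Nash equilibrium: no profitable finitely deviating strategy. -/
def IsWeakNEwith (G : QGame P V) (c : P → (ℕ → V) → EReal) (σ : Strat P V) (v : V) : Prop :=
  ∀ i τ, G.Valid τ → G.FinDev σ τ i v →
    c i (outcome σ v) ≤ c i (outcome (G.devProf σ τ i) v)

/-- Very weak Nash equilibrium: no profitable one-shot deviating strategy. -/
def IsVeryWeakNEwith (G : QGame P V) (c : P → (ℕ → V) → EReal) (σ : Strat P V) (v : V) : Prop :=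
  ∀ i τ, G.Valid τ → G.OneShotDev σ τ i v →
    c i (outcome σ v) ≤ c i (outcome (G.devProf σ τ i) v)

/-- The strategy profile induced by `σ` in the subgame after history `h`. -/
def subStrat (σ : Strat P V) (h : List V) : Strat P V := fun g v => σ (h ++ g) v

/-- The cost functions of the subgame after history `h`. -/
def subCost (G : QGame P V) (h : List V) : P → (ℕ → V) → EReal :=
  fun i ρ => G.cost i (prepend h ρ)

/-- Subgame perfect equilibrium: Nash equilibrium in every subgame. -/
def IsSPE (G : QGame P V) (v0 : V) (σ : Strat P V) : Prop :=
  ∀ h v, G.IsHist v0 h v → G.IsNEwith (G.subCost h) (subStrat σ h) v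

/-- Weak subgame perfect equilibrium: weak NE in every subgame. -/
def IsWeakSPE (G : QGame P V) (v0 : V) (σ : Strat P V) : Prop :=
  ∀ h v, G.IsHist v0 h v → G.IsWeakNEwith (G.subCost h) (subStrat σ h) v

/-- Very weak subgame perfect equilibrium: very weak NE in every subgame. -/
def IsVeryWeakSPE (G : QGame P V) (v0 : V) (σ : Strat P V) : Prop :=
  ∀ h v, G.IsHist v0 h v → G.IsVeryWeakNEwith (G.subCost h) (subStrat σ h) v

/-- One elimination step: `ρ` (a potential outcome in the subgame after `h`)
is erased if some player `i` controlling a vertex `ρ n` along `hρ` has an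
alternative edge to some `v' ≠ ρ (n+1)` such that every play `ρ'` in the
current potential set after the extended history gives `i` a strictly
smaller cost than `hρ`. -/
def Eset (G : QGame P V) (Pr : List V → V → Set (ℕ → V)) (h : List V) :
    Set (ℕ → V) :=
  {ρ | ∃ n v', G.E (ρ n) v' ∧ v' ≠ ρ (n + 1) ∧
      ∀ ρ' ∈ Pr (h ++ playPrefix ρ (n + 1)) v',
        G.cost (G.owner (ρ n)) (prepend (h ++ playPrefix ρ (n + 1)) ρ') <
          G.cost (G.owner (ρ n)) (prepend h ρ)}

/-- The transfinite sequence `P_α(hv)` of sets of potential outcomes of weak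
Nash equilibria in the subgame `(G|_h, v)`: all plays at stage `0`, removal
of `E_α` at successors, intersections at limits. -/
def Pset (G : QGame P V) (α : Ordinal) : List V → V → Set (ℕ → V) :=
  Ordinal.limitRecOn (motive := fun _ => List V → V → Set (ℕ → V)) α
    (fun _h v => {ρ | G.IsPlay ρ ∧ ρ 0 = v})
    (fun _ Pr => fun h v => Pr h v \ G.Eset Pr h)
    (fun α _ Pr => fun h v => ⋂ (β : Ordinal) (hβ : β < α), Pr β hβ h v)

/-- A sequence of plays converges to `ρ` (in the product topology on `V^ω`
with `V` discrete) iff every finite prefix of `ρ` is eventually a prefix of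
the members of the sequence. -/
def Converges (ρs : ℕ → ℕ → V) (ρ : ℕ → V) : Prop :=
  ∀ m, ∃ N, ∀ n ≥ N, ∀ k ≤ m, ρs n k = ρ k

/-- Upper semicontinuity of a cost function on plays. -/
def USCcost (G : QGame P V) (c : (ℕ → V) → EReal) : Prop :=
  ∀ (ρs : ℕ → ℕ → V) (ρ : ℕ → V), (∀ n, G.IsPlay (ρs n)) → G.IsPlay ρ →
    Converges ρs ρ →
      Filter.limsup (fun n => c (ρs n)) Filter.atTop ≤ c ρ

/-- A strategy (profile) is finite-memory if it is computed by a Moore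
machine: a finite set `M` of memory states, updated while reading the
history, determines the move. -/
def FinMem (σ : Strat P V) : Prop :=
  ∃ (M : Type) (_ : Finite M) (m0 : M) (upd : M → V → M) (act : M → V → V),
    ∀ h v, σ h v = act (h.foldl upd m0) v

/-- Quantitative reachability cost: the least index at which `ρ` visits the
target set `T`, and `+∞` if `T` is never visited. -/
def reachCost (T : Set V) (ρ : ℕ → V) : EReal :=
  if h : ∃ n, ρ n ∈ T then ((Nat.find h : ℕ) : EReal) else ⊤

/-- `G` is a quantitative reachability game with target sets `T i`. -/
def IsReachGame (G : QGame P V) (T : P → Set V) : Prop :=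
  ∀ i ρ, G.cost i ρ = reachCost (T i) ρ

/-- The set of players that have not visited their target set along the
history `h`. -/
def Iset (T : P → Set V) (h : List V) : Set P := {i | ∀ u ∈ h, u ∉ T i}

end QGame

/-!
Each `P_α(hv)` is closed in the compact space `V^ω`: this is preserved by intersections, and a
successor step removes an open set, because the cost of a reachability play is a continuous map
into `EReal` (it is locally constant where finite and tends to `⊤` where the target is never
visited), so a strict inequality against every play of a compact set persists on a whole cylinder.
A continuous cost that is finite on a compact set attains a finite maximum there.
-/

open Filter Topology

theorem IsCompact.eventually_forall_lt {X Y α : Type*} [TopologicalSpace X] [TopologicalSpace Y]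
    [LinearOrder α] [TopologicalSpace α] [OrderClosedTopology α] {K : Set X} (hK : IsCompact K)
    {f : X → α} (hf : ContinuousOn f K) {g : Y → α} {y : Y} (hg : ContinuousAt g y)
    (hlt : ∀ x ∈ K, f x < g y) : ∀ᶠ y' in 𝓝 y, ∀ x ∈ K, f x < g y' := by
  rcases K.eq_empty_or_nonempty with rfl | hne
  · simp
  obtain ⟨x₀, hx₀, hmax⟩ := hK.exists_isMaxOn hne hf
  filter_upwards [Tendsto.eventually_const_lt (hlt x₀ hx₀) hg] with y' hy' x hx
  exact (hmax hx).trans_lt hy'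

namespace QGame

variable {P V : Type}

theorem natCast_lt_reachCost_iff {W : Set V} {ρ : ℕ → V} {m : ℕ} :
    (m : EReal) < reachCost W ρ ↔ ∀ k ≤ m, ρ k ∉ W := by
  unfold reachCost
  split_ifs with hex
  · rw [Nat.cast_lt, Nat.lt_find_iff]
  · simp only [(EReal.natCast_ne_top m).lt_top, true_iff]
    exact fun k _ hk => hex ⟨k, hk⟩

theorem exists_natCast_eq_reachCost {W : Set V} {ρ : ℕ → V} (hlt : reachCost W ρ < ⊤) :
    ∃ m : ℕ, reachCost W ρ = m := by
  unfold reachCost at *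
  split_ifs at * with hex
  · exact ⟨_, rfl⟩
  · exact absurd hlt (lt_irrefl _)

theorem reachCost_congr_of_mem {W : Set V} {ρ ρ' : ℕ → V} {n : ℕ} (hn : ρ n ∈ W)
    (hagree : ∀ k ≤ n, ρ' k = ρ k) : reachCost W ρ' = reachCost W ρ := by
  have hex : ∃ k, ρ k ∈ W := ⟨n, hn⟩
  have hex' : ∃ k, ρ' k ∈ W := ⟨n, (hagree n le_rfl).symm ▸ hn⟩
  have hle : Nat.find hex ≤ n := Nat.find_min' hex hn
  rw [reachCost, reachCost, dif_pos hex, dif_pos hex', Nat.cast_inj, Nat.find_eq_iff]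
  exact ⟨hagree _ hle ▸ Nat.find_spec hex,
    fun k hk => hagree k (by omega) ▸ Nat.find_min hex hk⟩

theorem continuous_prepend [TopologicalSpace V] (h : List V) : Continuous (prepend h) := by
  refine continuous_pi fun n => ?_
  by_cases hn : n < h.length
  · simpa [prepend, hn] using continuous_const
  · simpa [prepend, hn] using continuous_apply (n - h.length)

section Discrete

variable [TopologicalSpace V] [DiscreteTopology V]

theorem eventually_forall_le_eq (ρ : ℕ → V) (n : ℕ) :
    ∀ᶠ ρ' in 𝓝 ρ, ∀ k ≤ n, ρ' k = ρ k :=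
  (Set.finite_Iic n).eventually_all.2 fun k _ =>
    tendsto_pure.1 (nhds_discrete V ▸ (continuous_apply k).tendsto ρ)

theorem continuous_reachCost (W : Set V) : Continuous (reachCost W) := by
  refine continuous_iff_continuousAt.2 fun ρ => ?_
  by_cases hex : ∃ n, ρ n ∈ W
  · obtain ⟨n, hn⟩ := hex
    refine (continuousAt_const (y := reachCost W ρ)).congr ?_
    filter_upwards [eventually_forall_le_eq ρ n] with ρ' hρ'
    exact (reachCost_congr_of_mem hn hρ').symm
  · have htop : reachCost W ρ = ⊤ := dif_neg hex
    rw [ContinuousAt, htop, EReal.tendsto_nhds_top_iff_real]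
    intro x
    filter_upwards [eventually_forall_le_eq ρ ⌈x⌉₊] with ρ' hρ'
    have hlt : (⌈x⌉₊ : EReal) < reachCost W ρ' :=
      natCast_lt_reachCost_iff.2 fun k hk hmem => hex ⟨k, hρ' k hk ▸ hmem⟩
    exact lt_of_le_of_lt (by exact_mod_cast Nat.le_ceil x) hlt

theorem _root_.IsCompact.exists_reachCost_le {K : Set (ℕ → V)} (hK : IsCompact K) (W : Set V)
    (hfin : ∀ ρ ∈ K, reachCost W ρ < ⊤) : ∃ c : ℕ, ∀ ρ ∈ K, reachCost W ρ ≤ c := by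
  rcases K.eq_empty_or_nonempty with rfl | hne
  · simp
  obtain ⟨ρ₀, hρ₀, hmax⟩ := hK.exists_isMaxOn hne (continuous_reachCost W).continuousOn
  obtain ⟨c, hc⟩ := exists_natCast_eq_reachCost (hfin ρ₀ hρ₀)
  exact ⟨c, fun ρ hρ => hc ▸ hmax hρ⟩

theorem isClosed_setOf_isPlay (G : QGame P V) (v : V) :
    IsClosed {ρ : ℕ → V | G.IsPlay ρ ∧ ρ 0 = v} := by
  simp only [IsPlay, Set.ofPred_and, Set.ofPred_forall]
  refine (isClosed_iInter fun n => ?_).inter (isClosed_eq (continuous_apply 0) continuous_const)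
  have hpair : Continuous fun ρ : ℕ → V => (ρ n, ρ (n + 1)) := by fun_prop
  exact IsClosed.preimage hpair (isClosed_discrete {p : V × V | G.E p.1 p.2})

theorem isOpen_Eset [Finite V] (G : QGame P V) (hcost : ∀ i, Continuous (G.cost i))
    {Pr : List V → V → Set (ℕ → V)} (hPr : ∀ h v, IsClosed (Pr h v)) (h : List V) :
    IsOpen (G.Eset Pr h) := by
  refine isOpen_iff_mem_nhds.2 fun ρ ⟨n, v', hE, hne, hlt⟩ => ?_
  set j := G.owner (ρ n)
  set h' := h ++ playPrefix ρ (n + 1)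
  have hlt_near : ∀ᶠ ρ'' in 𝓝 ρ, ∀ ρ' ∈ Pr h' v',
      G.cost j (prepend h' ρ') < G.cost j (prepend h ρ'') :=
    (hPr h' v').isCompact.eventually_forall_lt ((hcost j).comp (continuous_prepend h')).continuousOn
      ((hcost j).comp (continuous_prepend h)).continuousAt hlt
  filter_upwards [eventually_forall_le_eq ρ (n + 1), hlt_near] with ρ'' hagree hlt''
  have hprefix : playPrefix ρ'' (n + 1) = playPrefix ρ (n + 1) :=
    congrArg List.ofFn (funext fun k => hagree k (by omega))
  have hn : ρ'' n = ρ n := hagree n (by omega)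
  refine ⟨n, v', hn ▸ hE, hagree (n + 1) le_rfl ▸ hne, ?_⟩
  rw [hprefix, hn]
  exact hlt''

end Discrete

theorem Pset_zero (G : QGame P V) (h : List V) (v : V) :
    G.Pset 0 h v = {ρ | G.IsPlay ρ ∧ ρ 0 = v} := by
  rw [Pset, Ordinal.limitRecOn_zero]

theorem Pset_add_one (G : QGame P V) (α : Ordinal) (h : List V) (v : V) :
    G.Pset (α + 1) h v = G.Pset α h v \ G.Eset (G.Pset α) h := by
  rw [Pset, Ordinal.limitRecOn_add_one]
  rfl

theorem Pset_of_isSuccLimit (G : QGame P V) {α : Ordinal} (hα : Order.IsSuccLimit α)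
    (h : List V) (v : V) : G.Pset α h v = ⋂ (β : Ordinal) (_ : β < α), G.Pset β h v := by
  rw [Pset, Ordinal.limitRecOn_limit _ _ _ _ hα]
  rfl

theorem isClosed_Pset [TopologicalSpace V] [DiscreteTopology V] [Finite V] (G : QGame P V)
    (hcost : ∀ i, Continuous (G.cost i)) (α : Ordinal) (h : List V) (v : V) :
    IsClosed (G.Pset α h v) := by
  induction α using Ordinal.limitRecOn generalizing h v with
  | zero => exact Pset_zero G h v ▸ isClosed_setOf_isPlay G v
  | add_one α ih => exact Pset_add_one G α h v ▸ (ih h v).sdiff (isOpen_Eset G hcost ih h)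
  | limit α hα ih =>
    rw [Pset_of_isSuccLimit G hα]
    exact isClosed_biInter fun β hβ => ih β hβ h v

end QGame

open QGame in
theorem reach_Pset_cost_bounded_general {P V : Type} [Finite V]
    (G : QGame P V) (T : P → Set V) (hT : G.IsReachGame T)
    (α : Ordinal) (h : List V) (v : V) (i : P)
    (hfin : ∀ ρ ∈ G.Pset α h v, G.cost i ρ < ⊤) :
    (∃ c : ℕ, ∀ ρ ∈ G.Pset α h v, G.cost i ρ ≤ (c : EReal)) ∧
    @IsClosed (ℕ → V) (@Pi.topologicalSpace ℕ (fun _ => V) (fun _ => ⊥))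
      (G.Pset α h v) := by
  let _ : TopologicalSpace V := ⊥
  have : DiscreteTopology V := ⟨rfl⟩
  have hcost : ∀ j, G.cost j = reachCost (T j) := fun j => funext (hT j)
  have hclosed : IsClosed (G.Pset α h v) :=
    isClosed_Pset G (fun j => hcost j ▸ continuous_reachCost (T j)) α h v
  simp only [hcost] at hfin ⊢
  exact ⟨hclosed.isCompact.exists_reachCost_le (T i) hfin, hclosed⟩

open QGame in
/-- Uniform boundedness of finite reachability costs in the
potential-outcome sets: in a quantitative reachability game, if every play
of `P_α(hv)` has finite cost for player `i`, then the costs of the plays of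
`P_α(hv)` for player `i` are uniformly bounded by some constant `c ∈ ℕ`.
Equivalently, each set `P_α(hv)` is closed in `V^ω` (product topology over
the discrete topology on `V`). -/
theorem reach_Pset_cost_bounded {P V : Type} [Finite P] [Finite V]
    (G : QGame P V) (T : P → Set V) (hT : G.IsReachGame T)
    (α : Ordinal) (h : List V) (v : V) (i : P)
    (hfin : ∀ ρ ∈ G.Pset α h v, G.cost i ρ < ⊤) :
    (∃ c : ℕ, ∀ ρ ∈ G.Pset α h v, G.cost i ρ ≤ (c : EReal)) ∧
    @IsClosed (ℕ → V) (@Pi.topologicalSpace ℕ (fun _ => V) (fun _ => ⊥))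
      (G.Pset α h v) :=
  reach_Pset_cost_bounded_general G T hT α h v i hfin
end
end

section
/- In a quantitative reachability game, the decreasing sequence of potential-outcome sets stabilizes after finitely many steps: there exists a natural number α* such that P^I_{α*}(v) = P^I_{α*+1}(v) for all vertices v ∈ V and all subsets of players I ⊆ Π. -/
open Classical

noncomputable section

/-!
The sets `P_n(hv)` depend on `h` only through the set `I(h)` of players that have not yet
reached their targets, since a reachability cost only records whether and when a target is
hit. Let `Λ_n(I, v, j) ∈ ℕ ∪ {-1, +∞}` be the largest cost for `j` of a play of `P_n(hv)`
with `I(h) = I` (`-1` when that set is empty). This is a nonincreasing sequence in a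
well-founded order on finitely many coordinates, hence `Λ_{N+1} = Λ_N` for some `N`.
Then step `N + 1` removes nothing: if `ρ ∈ P_{N+1}(hv)` were eliminated by player `j`
deviating to `v'`, every play of `P_{N+1}` after the deviation would cost `j` strictly less
than `ρ`, so their maximum, which is attained because these sets are closed in the compact
space `V^ω`, would be below `Λ_N`, reached by the witness that kept `ρ` at step `N`.
-/

namespace QGame

variable {P V : Type}

def shift (ρ : ℕ → V) (k : ℕ) : ℕ → V := fun n => ρ (n + k)

@[simp]
lemma prepend_nil (x : ℕ → V) : prepend [] x = x := by
  funext n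
  simp [prepend]

@[simp]
lemma prepend_cons_zero (u : V) (h : List V) (x : ℕ → V) : prepend (u :: h) x 0 = u := by
  simp [prepend]

lemma shift_prepend_cons (u : V) (h : List V) (x : ℕ → V) :
    shift (prepend (u :: h) x) 1 = prepend h x := by
  funext n
  by_cases hn : n < h.length <;> simp [prepend, shift, hn]

lemma prepend_append (h₁ h₂ : List V) (x : ℕ → V) :
    prepend (h₁ ++ h₂) x = prepend h₁ (prepend h₂ x) := by
  induction h₁ with
  | nil => simp
  | cons u h₁ ih =>
    funext n
    cases n with
    | zero => simp
    | succ n =>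
      change shift (prepend (u :: (h₁ ++ h₂)) x) 1 n = shift (prepend (u :: h₁) _) 1 n
      rw [shift_prepend_cons, shift_prepend_cons, ih]

lemma playPrefix_succ (ρ : ℕ → V) (k : ℕ) :
    playPrefix ρ (k + 1) = ρ 0 :: playPrefix (shift ρ 1) k := by
  simp [playPrefix, shift, List.ofFn_succ]

lemma prepend_playPrefix_shift (ρ : ℕ → V) (k : ℕ) :
    prepend (playPrefix ρ k) (shift ρ k) = ρ := by
  induction k generalizing ρ with
  | zero => rfl
  | succ k ih =>
    funext n
    cases n with
    | zero => simp [playPrefix_succ]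
    | succ n =>
      rw [playPrefix_succ]
      change shift (prepend (ρ 0 :: _) _) 1 n = shift ρ 1 n
      rw [shift_prepend_cons]
      conv_rhs => rw [← ih (shift ρ 1)]
      rfl

lemma prepend_append_playPrefix (h : List V) (ρ : ℕ → V) (k : ℕ) :
    prepend (h ++ playPrefix ρ k) (shift ρ k) = prepend h ρ := by
  rw [prepend_append, prepend_playPrefix_shift]

lemma playPrefix_congr {σ ρ : ℕ → V} {k : ℕ} (h : ∀ i < k, σ i = ρ i) :
    playPrefix σ k = playPrefix ρ k :=
  congrArg List.ofFn (funext fun i => h i i.isLt)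

def reachTime (T : Set V) (ρ : ℕ → V) : ℕ∞ :=
  if h : ∃ n, ρ n ∈ T then (Nat.find h : ℕ∞) else ⊤

lemma reachCost_eq_reachTime (T : Set V) (ρ : ℕ → V) :
    reachCost T ρ = ((reachTime T ρ : ENNReal) : EReal) := by
  unfold reachCost reachTime
  split_ifs <;> norm_cast

lemma reachCost_lt_reachCost_iff {T : Set V} {ρ σ : ℕ → V} :
    reachCost T ρ < reachCost T σ ↔ reachTime T ρ < reachTime T σ := by
  simp [reachCost_eq_reachTime]

lemma reachTime_eq_ite (T : Set V) (ρ : ℕ → V) :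
    reachTime T ρ = if ρ 0 ∈ T then 0 else reachTime T (shift ρ 1) + 1 := by
  unfold reachTime
  by_cases h0 : ρ 0 ∈ T
  · rw [if_pos h0, dif_pos ⟨0, h0⟩, Nat.cast_eq_zero, Nat.find_eq_zero]
    exact h0
  · rw [if_neg h0]
    by_cases h : ∃ n, shift ρ 1 n ∈ T
    · obtain ⟨n, hn⟩ := h
      rw [dif_pos ⟨n + 1, hn⟩, dif_pos ⟨n, hn⟩, Nat.find_comp_succ _ ⟨n, hn⟩ h0]
      push_cast
      rfl
    · have h' : ¬∃ n, ρ n ∈ T := fun ⟨n, hn⟩ => by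
        cases n with
        | zero => exact h0 hn
        | succ n => exact h ⟨n, hn⟩
      rw [dif_neg h', dif_neg h, top_add]

lemma natCast_le_reachTime_iff {T : Set V} {ρ : ℕ → V} {k : ℕ} :
    (k : ℕ∞) ≤ reachTime T ρ ↔ ∀ i < k, ρ i ∉ T := by
  unfold reachTime
  split_ifs with h
  · rw [Nat.cast_le, Nat.le_find_iff]
  · push Not at h
    exact iff_of_true le_top fun i _ => h i

lemma natCast_le_reachTime_congr {T : Set V} {ρ σ : ℕ → V} {k : ℕ}
    (hk : (k : ℕ∞) ≤ reachTime T ρ) (hσ : ∀ i < k, σ i = ρ i) : (k : ℕ∞) ≤ reachTime T σ :=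
  natCast_le_reachTime_iff.2 fun i hi => hσ i hi ▸ natCast_le_reachTime_iff.1 hk i hi

lemma reachTime_prepend_lt_iff {T : Set V} (H : List V) (x y : ℕ → V) :
    reachTime T (prepend H x) < reachTime T (prepend H y) ↔
      (∀ u ∈ H, u ∉ T) ∧ reachTime T x < reachTime T y := by
  induction H with
  | nil => simp
  | cons u H ih =>
    rw [reachTime_eq_ite _ (prepend _ x), reachTime_eq_ite _ (prepend _ y),
      shift_prepend_cons, shift_prepend_cons, prepend_cons_zero]
    by_cases hu : u ∈ T
    · simp [hu]
    · simp [hu, ih]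

section LimitClosed

def LimitClosed (S : Set (ℕ → V)) : Prop :=
  ∀ ρs ρ, (∀ n, ρs n ∈ S) → Converges ρs ρ → ρ ∈ S

lemma exists_strictMono_converges [Finite V] (ρs : ℕ → ℕ → V) :
    ∃ φ : ℕ → ℕ, ∃ ρ, StrictMono φ ∧ Converges (ρs ∘ φ) ρ := by
  let _ : TopologicalSpace V := ⊥
  have : DiscreteTopology V := ⟨rfl⟩
  obtain ⟨ρ, φ, hφ, hlim⟩ := CompactSpace.tendsto_subseq ρs
  refine ⟨φ, ρ, hφ, fun m => ?_⟩
  have hcoord : ∀ k, ∀ᶠ n in Filter.atTop, ρs (φ n) k = ρ k := fun k =>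
    Filter.tendsto_pure.1 (nhds_discrete V ▸ ((continuous_apply k).tendsto ρ).comp hlim)
  obtain ⟨N, hN⟩ := Filter.eventually_atTop.1
    ((Filter.eventually_all_finset (Finset.range (m + 1))).2 fun k _ => hcoord k)
  exact ⟨N, fun n hn k hk => hN n hn k (Finset.mem_range.2 (Nat.lt_succ_of_le hk))⟩

variable {S : Set (ℕ → V)} {T : Set V}

lemma LimitClosed.exists_reachTime_eq_top [Finite V] (hS : LimitClosed S)
    (h : ∀ m : ℕ, ∃ ρ ∈ S, (m : ℕ∞) ≤ reachTime T ρ) : ∃ ρ ∈ S, reachTime T ρ = ⊤ := by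
  choose ρs hρsS hρs using h
  obtain ⟨φ, ρ, hφ, hlim⟩ := exists_strictMono_converges ρs
  refine ⟨ρ, hS _ ρ (fun n => hρsS _) hlim, ENat.eq_top_iff_forall_ge.2 fun m => ?_⟩
  obtain ⟨N, hN⟩ := hlim m
  have hlarge : (m : ℕ∞) ≤ reachTime T (ρs (φ (max N m))) :=
    le_trans (Nat.cast_le.2 ((le_max_right N m).trans hφ.le_apply)) (hρs _)
  exact natCast_le_reachTime_congr hlarge fun i hi => (hN _ (le_max_left N m) i hi.le).symm

lemma LimitClosed.exists_forall_reachTime_le [Finite V] (hS : LimitClosed S)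
    (hne : S.Nonempty) : ∃ ρ ∈ S, ∀ ρ' ∈ S, reachTime T ρ' ≤ reachTime T ρ := by
  by_cases hlt : sSup (reachTime T '' S) < ⊤
  · have : Nonempty (reachTime T '' S) := (hne.image _).to_subtype
    obtain ⟨ρ, hρS, hρ⟩ := ENat.sSup_mem_of_nonempty_of_lt_top hlt
    exact ⟨ρ, hρS, fun ρ' hρ' => hρ ▸ le_sSup (Set.mem_image_of_mem _ hρ')⟩
  · rw [not_lt, top_le_iff] at hlt
    obtain ⟨ρ, hρS, hρ⟩ := hS.exists_reachTime_eq_top fun m => by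
      obtain ⟨_, ⟨ρ, hρS, rfl⟩, hm⟩ := lt_sSup_iff.1 (hlt ▸ ENat.natCast_lt_top m)
      exact ⟨ρ, hρS, hm.le⟩
    exact ⟨ρ, hρS, fun _ _ => hρ ▸ le_top⟩

end LimitClosed

section SupReachTime

/-- `⊥` plays the role of the paper's `-1`, the maximal cost over an empty set of plays. -/
def supReachTime (T : Set V) (S : Set (ℕ → V)) : WithBot ℕ∞ :=
  ⨆ ρ ∈ S, (reachTime T ρ : WithBot ℕ∞)

variable {T : Set V} {S : Set (ℕ → V)}

lemma le_supReachTime {ρ : ℕ → V} (hρ : ρ ∈ S) :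
    (reachTime T ρ : WithBot ℕ∞) ≤ supReachTime T S :=
  le_iSup₂ (f := fun ρ (_ : ρ ∈ S) => (reachTime T ρ : WithBot ℕ∞)) ρ hρ

lemma supReachTime_mono {S' : Set (ℕ → V)} (hSS' : S ⊆ S') :
    supReachTime T S ≤ supReachTime T S' :=
  biSup_mono hSS'

@[simp]
lemma supReachTime_empty : supReachTime T ∅ = ⊥ := by
  simp [supReachTime]

lemma LimitClosed.supReachTime_lt [Finite V] (hS : LimitClosed S) {c : ℕ∞}
    (h : ∀ ρ ∈ S, reachTime T ρ < c) : supReachTime T S < c := by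
  rcases S.eq_empty_or_nonempty with rfl | hne
  · simp
  · obtain ⟨ρ₀, hρ₀S, hρ₀⟩ := hS.exists_forall_reachTime_le hne
    exact (iSup₂_le fun ρ hρ => WithBot.coe_le_coe.2 (hρ₀ ρ hρ)).trans_lt
      (WithBot.coe_lt_coe.2 (h ρ₀ hρ₀S))

end SupReachTime

def PsetNat (G : QGame P V) : ℕ → List V → V → Set (ℕ → V)
  | 0 => fun _ v => {ρ | G.IsPlay ρ ∧ ρ 0 = v}
  | n + 1 => fun h v => G.PsetNat n h v \ G.Eset (G.PsetNat n) h

lemma Pset_natCast (G : QGame P V) (n : ℕ) : G.Pset n = G.PsetNat n := by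
  induction n with
  | zero => exact Ordinal.limitRecOn_zero (motive := fun _ => List V → V → Set (ℕ → V)) _ _ _
  | succ n ih =>
    rw [Nat.cast_succ, Pset, Ordinal.limitRecOn_add_one, ← Pset, ih]
    rfl

lemma Iset_append (T : P → Set V) (h₁ h₂ : List V) :
    Iset T (h₁ ++ h₂) = Iset T h₁ ∩ Iset T h₂ := by
  ext j
  simp [Iset, or_imp, forall_and]

lemma PsetNat_succ_subset (G : QGame P V) (n : ℕ) (h : List V) (v : V) :
    G.PsetNat (n + 1) h v ⊆ G.PsetNat n h v :=
  Set.sdiff_subset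

def maxCosts (G : QGame P V) (T : P → Set V) (n : ℕ) : Set P → V → P → WithBot ℕ∞ :=
  fun I v j => ⨆ (h : List V) (_ : Iset T h = I), supReachTime (T j) (G.PsetNat n h v)

lemma maxCosts_antitone (G : QGame P V) (T : P → Set V) : Antitone (G.maxCosts T) :=
  antitone_nat_of_succ_le fun n _ v _ =>
    iSup₂_mono fun h _ => supReachTime_mono (G.PsetNat_succ_subset n h v)

lemma exists_maxCosts_succ_eq [Finite P] [Finite V] (G : QGame P V) (T : P → Set V) :
    ∃ n, G.maxCosts T (n + 1) = G.maxCosts T n := by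
  obtain ⟨n, hn⟩ := WellFoundedLT.antitone_chain_condition (maxCosts_antitone G T)
  exact ⟨n, (hn (n + 1) n.le_succ).symm⟩

section ReachGame

variable {G : QGame P V} {T : P → Set V}

lemma mem_Eset_iff (hT : G.IsReachGame T) (Pr : List V → V → Set (ℕ → V)) (h : List V)
    (ρ : ℕ → V) :
    ρ ∈ G.Eset Pr h ↔ ∃ n v', G.E (ρ n) v' ∧ v' ≠ ρ (n + 1) ∧
      ∀ ρ' ∈ Pr (h ++ playPrefix ρ (n + 1)) v',
        G.owner (ρ n) ∈ Iset T (h ++ playPrefix ρ (n + 1)) ∧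
          reachTime (T (G.owner (ρ n))) ρ' < reachTime (T (G.owner (ρ n))) (shift ρ (n + 1)) := by
  refine exists_congr fun n => exists_congr fun v' => and_congr_right fun _ =>
    and_congr_right fun _ => forall₂_congr fun ρ' _ => ?_
  rw [hT, hT, ← prepend_append_playPrefix h ρ (n + 1), reachCost_lt_reachCost_iff,
    reachTime_prepend_lt_iff]
  rfl

lemma exists_reachTime_le_of_not_mem_Eset (hT : G.IsReachGame T)
    {Pr : List V → V → Set (ℕ → V)} {h : List V} {σ ρ : ℕ → V} {n : ℕ} {v' : V}
    (hσ : σ ∉ G.Eset Pr h) (hσρ : ∀ i ≤ n + 1, σ i = ρ i) (hedge : G.E (ρ n) v')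
    (hne : v' ≠ ρ (n + 1)) :
    ∃ ρ' ∈ Pr (h ++ playPrefix ρ (n + 1)) v',
      G.owner (ρ n) ∈ Iset T (h ++ playPrefix ρ (n + 1)) →
        reachTime (T (G.owner (ρ n))) (shift σ (n + 1)) ≤ reachTime (T (G.owner (ρ n))) ρ' := by
  rw [mem_Eset_iff hT] at hσ
  push Not at hσ
  have hpre : playPrefix σ (n + 1) = playPrefix ρ (n + 1) :=
    playPrefix_congr fun i hi => hσρ i hi.le
  rw [← hσρ n (by omega), ← hpre]
  exact hσ n v' (by rwa [hσρ n (by omega)]) (by rwa [hσρ (n + 1) le_rfl])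

lemma PsetNat_congr (hT : G.IsReachGame T) (n : ℕ) :
    ∀ {h₁ h₂ : List V}, Iset T h₁ = Iset T h₂ → G.PsetNat n h₁ = G.PsetNat n h₂ := by
  induction n with
  | zero => intro _ _ _; rfl
  | succ n ih =>
    intro h₁ h₂ hI
    funext v
    have hIapp : ∀ l, Iset T (h₁ ++ l) = Iset T (h₂ ++ l) := fun l => by
      rw [Iset_append, Iset_append, hI]
    change G.PsetNat n h₁ v \ G.Eset (G.PsetNat n) h₁ = G.PsetNat n h₂ v \ G.Eset (G.PsetNat n) h₂
    ext ρ
    simp only [Set.mem_sdiff, mem_Eset_iff hT, ih hI, ih (hIapp _), hIapp]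

lemma maxCosts_Iset (hT : G.IsReachGame T) (n : ℕ) (h : List V) (v : V) (j : P) :
    G.maxCosts T n (Iset T h) v j = supReachTime (T j) (G.PsetNat n h v) :=
  le_antisymm (iSup₂_le fun _ hh' => PsetNat_congr hT n hh' ▸ le_rfl)
    (le_iSup₂_of_le h rfl le_rfl)

lemma PsetNat_limitClosed [Finite V] (hT : G.IsReachGame T)
    (n : ℕ) (h : List V) (v : V) : LimitClosed (G.PsetNat n h v) := by
  induction n generalizing h v with
  | zero =>
    intro ρs ρ hρs hlim
    refine ⟨fun k => ?_, ?_⟩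
    · obtain ⟨N, hN⟩ := hlim (k + 1)
      rw [← hN N le_rfl k (by omega), ← hN N le_rfl (k + 1) le_rfl]
      exact (hρs N).1 k
    · obtain ⟨N, hN⟩ := hlim 0
      rw [← hN N le_rfl 0 le_rfl]
      exact (hρs N).2
  | succ n ih =>
    intro ρs ρ hρs hlim
    refine ⟨ih h v ρs ρ (fun k => (hρs k).1) hlim, fun hE => ?_⟩
    obtain ⟨m, v', hedge, hne, hlt⟩ := (mem_Eset_iff hT _ h ρ).1 hE
    set j := G.owner (ρ m)
    set S := G.PsetNat n (h ++ playPrefix ρ (m + 1)) v'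
    -- the plays `ρs N` close to `ρ` are not eliminated, so `S` has plays avoiding `T j` as long
    -- as `shift ρ (m + 1)` does, up to any bound
    have hslow : ∀ k : ℕ, (k : ℕ∞) ≤ reachTime (T j) (shift ρ (m + 1)) →
        ∃ ρ' ∈ S, (k : ℕ∞) ≤ reachTime (T j) ρ' := by
      intro k hk
      obtain ⟨N, hN⟩ := hlim (m + 1 + k)
      obtain ⟨ρ', hρ'S, hρ'⟩ := exists_reachTime_le_of_not_mem_Eset hT (hρs N).2
        (fun i hi => hN N le_rfl i (by omega)) hedge hne
      refine ⟨ρ', hρ'S, (natCast_le_reachTime_congr hk fun i hi => ?_).trans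
        (hρ' (hlt ρ' hρ'S).1)⟩
      exact hN N le_rfl (i + (m + 1)) (by omega)
    obtain ⟨ρ₀, hρ₀S, hρ₀⟩ := (ih _ v').exists_forall_reachTime_le (T := T j)
      ((hslow 0 (by simp)).imp fun _ => And.left)
    have hfin := (hlt ρ₀ hρ₀S).2
    lift reachTime (T j) ρ₀ to ℕ using hfin.ne_top with t
    obtain ⟨ρ', hρ'S, hρ'⟩ := hslow (t + 1) (by exact_mod_cast Order.add_one_le_of_lt hfin)
    exact absurd (hρ'.trans (hρ₀ ρ' hρ'S)) (by exact_mod_cast Nat.not_succ_le_self t)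

lemma PsetNat_add_two_of_maxCosts_eq [Finite V] (hT : G.IsReachGame T) {n : ℕ}
    (hn : G.maxCosts T (n + 1) = G.maxCosts T n) (h : List V) (v : V) :
    G.PsetNat (n + 2) h v = G.PsetNat (n + 1) h v := by
  refine Set.Subset.antisymm (G.PsetNat_succ_subset _ h v) fun ρ hρ => ⟨hρ, fun hE => ?_⟩
  obtain ⟨m, v', hedge, hne, hlt⟩ := (mem_Eset_iff hT _ h ρ).1 hE
  set j := G.owner (ρ m)
  set H := h ++ playPrefix ρ (m + 1)
  obtain ⟨ρ'', hρ''S, hρ''⟩ :=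
    exists_reachTime_le_of_not_mem_Eset hT hρ.2 (fun _ _ => rfl) hedge hne
  have hsup : supReachTime (T j) (G.PsetNat (n + 1) H v') =
      supReachTime (T j) (G.PsetNat n H v') := by
    rw [← maxCosts_Iset hT, ← maxCosts_Iset hT, hn]
  rcases (G.PsetNat (n + 1) H v').eq_empty_or_nonempty with hempty | ⟨ρ₁, hρ₁⟩
  · have hbot := le_supReachTime (T := T j) hρ''S
    rw [← hsup, hempty, supReachTime_empty] at hbot
    exact WithBot.coe_ne_bot (le_bot_iff.1 hbot)
  · refine lt_irrefl (supReachTime (T j) (G.PsetNat (n + 1) H v')) ?_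
    calc supReachTime (T j) (G.PsetNat (n + 1) H v')
        < reachTime (T j) (shift ρ (m + 1)) :=
          (PsetNat_limitClosed hT _ H v').supReachTime_lt fun ρ' hρ' => (hlt ρ' hρ').2
      _ ≤ reachTime (T j) ρ'' := WithBot.coe_le_coe.2 (hρ'' (hlt ρ₁ hρ₁).1)
      _ ≤ supReachTime (T j) (G.PsetNat n H v') := le_supReachTime hρ''S
      _ = supReachTime (T j) (G.PsetNat (n + 1) H v') := hsup.symm

end ReachGame

end QGame

open QGame in
/-- In a quantitative reachability game on a finite graph,
the decreasing sequence of potential-outcome sets stabilizes after finitely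
many steps: there is a natural number `α*` with `P_{α*}(hv) = P_{α*+1}(hv)`
for every history (hence for every vertex `v` and every set `I ⊆ Π` of
players not yet having reached their targets). -/
theorem reach_Pset_finite_fixpoint {P V : Type} [Finite P] [Finite V]
    (G : QGame P V) (T : P → Set V) (hT : G.IsReachGame T) :
    ∃ αstar : ℕ, ∀ (h : List V) (v : V),
      G.Pset (αstar : Ordinal) h v = G.Pset ((αstar : Ordinal) + 1) h v := by
  obtain ⟨N, hN⟩ := exists_maxCosts_succ_eq G T
  refine ⟨N + 1, fun h v => ?_⟩
  rw [← Nat.cast_succ, Pset_natCast, Pset_natCast]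
  exact (PsetNat_add_two_of_maxCosts_eq hT hN h v).symm
end
end
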